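/- Let p ≠ 3 be a prime, k ≥ 1, and θ, z_0, z_1 ∈ E_p. If z_0 = ((z_0 + θz_1 + θ²)/(θ²z_0 + θz_1 + 1))^k, then z_0 = 1. -/

import Mathlib

/-! Write `A`, `B` for the numerator and denominator. All three variables are `≡ 1` modulo the
maximal ideal, so `B ≡ 3` is a unit when `p ≠ 3`, and `A - B = (z₀ - 1)(1 - θ²)`. Hence
`A / B = 1 + ε (z₀ - 1)` with `|ε| < 1`, and since `|(1 + x)^k - 1| ≤ |x|` for `|x| ≤ 1`, the
equation gives `|z₀ - 1| ≤ |ε| |z₀ - 1|`, forcing `z₀ = 1`. -/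

/-- `x ∈ E_p` : a unit with `|x - 1|_p < p^(-1/(p-1))`. -/
def IsEp (p : ℕ) [Fact p.Prime] (x : ℚ_[p]) : Prop :=
  ‖x‖ = 1 ∧ ‖x - 1‖ < (p : ℝ) ^ (-(1 : ℝ) / ((p : ℝ) - 1))

namespace IsUltrametricDist

variable {R : Type*} [NormedRing R] [IsUltrametricDist R]

lemma norm_mul_sub_one_lt_one {a b : R} (ha : ‖a - 1‖ < 1) (hb : ‖b - 1‖ < 1) :
    ‖a * b - 1‖ < 1 := by
  have hab : ‖(a - 1) * (b - 1)‖ < 1 :=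
    (norm_mul_le _ _).trans_lt (mul_lt_one_of_nonneg_of_lt_one_left (norm_nonneg _) ha hb.le)
  calc ‖a * b - 1‖ = ‖(a - 1) * (b - 1) + (a - 1) + (b - 1)‖ := by congr 1; noncomm_ring
    _ ≤ max (max ‖(a - 1) * (b - 1)‖ ‖a - 1‖) ‖b - 1‖ :=
      (norm_add_le_max _ _).trans (max_le_max_right _ (norm_add_le_max _ _))
    _ < 1 := max_lt (max_lt hab ha) hb

variable [NormOneClass R]

lemma norm_one_add_pow_sub_one_le {x : R} (hx : ‖x‖ ≤ 1) (k : ℕ) :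
    ‖(1 + x) ^ k - 1‖ ≤ ‖x‖ := by
  have h1x : ‖1 + x‖ ≤ 1 := (norm_add_le_max _ _).trans (by simp [hx])
  have hsum : ‖∑ i ∈ Finset.range k, (1 + x) ^ i‖ ≤ 1 :=
    norm_sum_le_of_forall_le_of_nonneg zero_le_one fun i _ =>
      (_root_.norm_pow_le _ _).trans (pow_le_one₀ (norm_nonneg _) h1x)
  calc ‖(1 + x) ^ k - 1‖ = ‖(∑ i ∈ Finset.range k, (1 + x) ^ i) * x‖ := by
        rw [← geom_sum_mul, add_sub_cancel_left]
    _ ≤ ‖x‖ := (norm_mul_le _ _).trans (mul_le_of_le_one_left (norm_nonneg _) hsum)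

lemma eq_zero_of_one_add_eq_one_add_mul_pow {ε w : R} (hε : ‖ε‖ < 1) (hw : ‖w‖ ≤ 1) {k : ℕ}
    (h : 1 + w = (1 + ε * w) ^ k) : w = 0 := by
  by_contra hw0
  have hεw : ‖ε * w‖ ≤ ‖ε‖ * ‖w‖ := norm_mul_le _ _
  have hle : ‖w‖ ≤ ‖ε‖ * ‖w‖ :=
    calc ‖w‖ = ‖(1 + ε * w) ^ k - 1‖ := by rw [← h, add_sub_cancel_left]
      _ ≤ ‖ε * w‖ :=
        norm_one_add_pow_sub_one_le (hεw.trans (mul_le_one₀ hε.le (norm_nonneg _) hw)) k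
      _ ≤ ‖ε‖ * ‖w‖ := hεw
  exact (mul_lt_of_lt_one_left (norm_pos_iff.2 hw0) hε).not_ge hle

theorem eq_one_of_eq_sos_ratio_pow {K : Type*} [NormedField K] [IsUltrametricDist K]
    (h3 : ‖(3 : K)‖ = 1) {θ z₀ z₁ : K} (hθ : ‖θ - 1‖ < 1) (h0 : ‖z₀ - 1‖ < 1)
    (h1 : ‖z₁ - 1‖ < 1) {k : ℕ}
    (h : z₀ = ((z₀ + θ * z₁ + θ ^ 2) / (θ ^ 2 * z₀ + θ * z₁ + 1)) ^ k) : z₀ = 1 := by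
  set B := θ ^ 2 * z₀ + θ * z₁ + 1 with hB_def
  have hθ2 : ‖θ ^ 2 - 1‖ < 1 := by simpa only [sq] using norm_mul_sub_one_lt_one hθ hθ
  have hB3 : ‖B - 3‖ < 1 :=
    calc ‖B - 3‖ = ‖(θ ^ 2 * z₀ - 1) + (θ * z₁ - 1)‖ := by congr 1; ring
      _ ≤ max ‖θ ^ 2 * z₀ - 1‖ ‖θ * z₁ - 1‖ := norm_add_le_max _ _
      _ < 1 := max_lt (norm_mul_sub_one_lt_one hθ2 h0) (norm_mul_sub_one_lt_one hθ h1)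
  have hB : ‖B‖ = 1 := by
    have := norm_add_eq_max_of_norm_ne_norm (x := B - 3) (y := 3) (by rw [h3]; exact hB3.ne)
    rwa [sub_add_cancel, h3, max_eq_right hB3.le] at this
  have hB0 : B ≠ 0 := norm_ne_zero_iff.1 (by rw [hB]; exact one_ne_zero)
  set ε := (1 - θ ^ 2) / B
  have hε : ‖ε‖ < 1 := by rwa [norm_div, hB, div_one, norm_sub_rev]
  have hratio : (z₀ + θ * z₁ + θ ^ 2) / B = 1 + ε * (z₀ - 1) := by
    have hεB : ε * B = 1 - θ ^ 2 := div_mul_cancel₀ _ hB0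
    rw [div_eq_iff hB0]
    linear_combination (1 - z₀) * hεB - hB_def
  refine sub_eq_zero.1 (eq_zero_of_one_add_eq_one_add_mul_pow hε h0.le (k := k) ?_)
  rwa [add_sub_cancel, ← hratio]

end IsUltrametricDist

lemma IsEp.norm_sub_one_lt_one {p : ℕ} [Fact p.Prime] {x : ℚ_[p]} (hx : IsEp p x) :
    ‖x - 1‖ < 1 := by
  have hp : (1 : ℝ) < p := mod_cast (Fact.out : p.Prime).one_lt
  refine hx.2.trans (Real.rpow_lt_one_of_one_lt_of_neg hp ?_)
  exact div_neg_of_neg_of_pos (by norm_num) (by linarith)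

theorem ti_solution_z0_eq_one_general (p : ℕ) [Fact p.Prime] (hp3 : p ≠ 3)
    (k : ℕ) (θ z₀ z₁ : ℚ_[p])
    (hθ : IsEp p θ) (h0 : IsEp p z₀) (h1 : IsEp p z₁)
    (h : z₀ = ((z₀ + θ * z₁ + θ ^ 2) / (θ ^ 2 * z₀ + θ * z₁ + 1)) ^ k) :
    z₀ = 1 := by
  have h3 : ‖(3 : ℚ_[p])‖ = 1 := by
    have hcop : p.Coprime 3 := (Nat.coprime_primes Fact.out Nat.prime_three).2 hp3
    exact_mod_cast Padic.norm_natCast_eq_one_iff.2 hcop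
  exact IsUltrametricDist.eq_one_of_eq_sos_ratio_pow h3 hθ.norm_sub_one_lt_one
    h0.norm_sub_one_lt_one h1.norm_sub_one_lt_one h

theorem ti_solution_z0_eq_one (p : ℕ) [Fact p.Prime] (hp3 : p ≠ 3)
    (k : ℕ) (hk : 1 ≤ k) (θ z₀ z₁ : ℚ_[p])
    (hθ : IsEp p θ) (h0 : IsEp p z₀) (h1 : IsEp p z₁)
    (h : z₀ = ((z₀ + θ * z₁ + θ ^ 2) / (θ ^ 2 * z₀ + θ * z₁ + 1)) ^ k) :
    z₀ = 1 :=
  ti_solution_z0_eq_one_general p hp3 k θ z₀ z₁ hθ h0 h1 h
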